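/- Let X be a compact Hausdorff topological space with a continuous right action of B. If u ∈ X has dense horocycle orbit (the closure of {h_s(u) : s ∈ ℝ} is X), M ⊆ X is a closed U-invariant set, and g_t(u) ∈ M for some t ∈ ℝ, then M = X. -/
import Mathlib


open Matrix Real
open scoped MatrixGroups UpperHalfPlane

/-- The diagonal matrix `d(t)` generating the geodesic flow. -/
noncomputable def dMat (t : ℝ) : SL(2, ℝ) :=
  ⟨!![Real.exp (t / 2), 0; 0, Real.exp (-(t / 2))], by
    simp [Matrix.det_fin_two_of, ← Real.exp_add]⟩

/-- The unipotent matrix `u(s)` generating the horocycle flow. -/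
noncomputable def uMat (s : ℝ) : SL(2, ℝ) :=
  ⟨!![1, s; 0, 1], by simp [Matrix.det_fin_two_of]⟩

/-- The upper-triangular subgroup `B` of `SL(2,ℝ)` with positive diagonal. -/
def Bsub : Subgroup SL(2, ℝ) where
  carrier := {g | g.1 1 0 = 0 ∧ 0 < g.1 0 0}
  one_mem' := by norm_num
  mul_mem' := by
    rintro a b ⟨ha0, ha1⟩ ⟨hb0, hb1⟩
    constructor
    · show (a * b).1 1 0 = 0
      rw [Matrix.SpecialLinearGroup.coe_mul, Matrix.mul_apply, Fin.sum_univ_two, ha0, hb0]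
      ring
    · show 0 < (a * b).1 0 0
      rw [Matrix.SpecialLinearGroup.coe_mul, Matrix.mul_apply, Fin.sum_univ_two, hb0]
      simpa using mul_pos ha1 hb1
  inv_mem' := by
    rintro a ⟨ha0, ha1⟩
    have hdet := a.2
    rw [Matrix.det_fin_two, ha0] at hdet
    constructor
    · show (a⁻¹).1 1 0 = 0
      rw [Matrix.SpecialLinearGroup.SL2_inv_expl]
      simp [ha0]
    · show 0 < (a⁻¹).1 0 0
      rw [Matrix.SpecialLinearGroup.SL2_inv_expl]
      simp only [Matrix.SpecialLinearGroup.coe_mk]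
      show 0 < a.1 1 1
      nlinarith

theorem dMat_mem_B (t : ℝ) : dMat t ∈ Bsub := by
  constructor
  · show (dMat t).1 1 0 = 0
    simp [dMat]
  · show 0 < (dMat t).1 0 0
    simp [dMat, Real.exp_pos]

theorem uMat_mem_B (s : ℝ) : uMat s ∈ Bsub := by
  constructor
  · show (uMat s).1 1 0 = 0
    simp [uMat]
  · show 0 < (uMat s).1 0 0
    simp [uMat]

/-- The matrix topology on `SL(2,ℝ)`, induced from the space of matrices. -/
instance : TopologicalSpace SL(2, ℝ) :=
  TopologicalSpace.induced (fun g => (g : Matrix (Fin 2) (Fin 2) ℝ)) inferInstance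

/-- `d(t)` as an element of the subgroup `B`. -/
noncomputable def dB (t : ℝ) : Bsub := ⟨dMat t, dMat_mem_B t⟩

/-- `u(s)` as an element of the subgroup `B`. -/
noncomputable def uB (s : ℝ) : Bsub := ⟨uMat s, uMat_mem_B s⟩

section

variable {X : Type*} [TopologicalSpace X]

/-- `M` is a minimal set for the horocycle flow: nonempty, closed, invariant under the
horocycle flow, and properly containing no nonempty closed invariant subset. -/
def IsMinimalHoro (act : X → Bsub → X) (M : Set X) : Prop :=
  M.Nonempty ∧ IsClosed M ∧ (∀ s : ℝ, (fun x => act x (uB s)) '' M = M) ∧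
    ∀ M' : Set X, M' ⊆ M → M'.Nonempty → IsClosed M' →
      (∀ s : ℝ, (fun x => act x (uB s)) '' M' = M') → M' = M

end

theorem dMat_mul_uMat (t s : ℝ) : dMat t * uMat s = uMat (s * Real.exp t) * dMat t := by
  apply Subtype.ext
  show (dMat t).1 * (uMat s).1 = (uMat (s * Real.exp t)).1 * (dMat t).1
  simp only [dMat, uMat]
  ext i j
  fin_cases i <;> fin_cases j <;>
    simp [Matrix.mul_apply, Fin.sum_univ_two] <;>
    rw [mul_assoc, ← Real.exp_add] <;> ring_nf

theorem dB_mul_uB (t s : ℝ) : dB t * uB s = uB (s * Real.exp t) * dB t := by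
  apply Subtype.ext
  exact dMat_mul_uMat t s

theorem dB_neg_mul (t : ℝ) : dB (-t) * dB t = 1 := by
  apply Subtype.ext
  apply Subtype.ext
  show (dMat (-t)).1 * (dMat t).1 = 1
  simp only [dMat]
  ext i j
  fin_cases i <;> fin_cases j <;>
    simp [Matrix.mul_apply, Fin.sum_univ_two, ← Real.exp_add, Matrix.one_apply] <;> ring

/-- Let `X` be a compact Hausdorff space with a continuous right action of `B`.
If `u ∈ X` has a dense horocycle orbit, `M` is a closed `U`-invariant set and `g_t(u) ∈ M`
for some `t`, then `M = X`. -/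
theorem closed_invariant_set_containing_geodesic_translate_of_transitive_point
    {X : Type*} [TopologicalSpace X] [CompactSpace X] [T2Space X]
    (act : X → Bsub → X)
    (act_one : ∀ x : X, act x 1 = x)
    (act_mul : ∀ (x : X) (g h : Bsub), act (act x g) h = act x (g * h))
    (act_cont : Continuous fun p : X × Bsub => act p.1 p.2)
    (u : X) (hu : Dense (Set.range fun s : ℝ => act u (uB s)))
    (M : Set X) (hMclosed : IsClosed M)
    (hMinv : ∀ s : ℝ, (fun x => act x (uB s)) '' M = M)
    (t : ℝ) (ht : act u (dB t) ∈ M) :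
    M = Set.univ := by
  -- M is invariant: points of M stay in M under horocycle flow
  have hMinv' : ∀ (x : X), x ∈ M → ∀ s : ℝ, act x (uB s) ∈ M := by
    intro x hx s
    rw [← hMinv s]
    exact ⟨x, hx, rfl⟩
  -- key: the geodesic translate of every horocycle-orbit point lies in M
  have key : ∀ s : ℝ, act (act u (uB s)) (dB t) ∈ M := by
    intro s
    have h1 : act (act u (dB t)) (uB (s * Real.exp (-t))) ∈ M :=
      hMinv' _ ht _
    rw [act_mul, dB_mul_uB] at h1
    have hs : s * Real.exp (-t) * Real.exp t = s := by
      rw [mul_assoc, ← Real.exp_add]; simp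
    rw [hs, ← act_mul] at h1
    exact h1
  -- the continuous map f = act · (dB t) sends the dense orbit into M, hence all of X into M
  set f : X → X := fun x => act x (dB t) with hf
  have fcont : Continuous f := act_cont.comp (continuous_id.prodMk continuous_const)
  have hsub : Set.range (fun s : ℝ => act u (uB s)) ⊆ f ⁻¹' M := by
    rintro _ ⟨s, rfl⟩
    exact key s
  have hclosed : IsClosed (f ⁻¹' M) := hMclosed.preimage fcont
  have hall : ∀ x : X, f x ∈ M := by
    intro x
    have : x ∈ closure (Set.range fun s : ℝ => act u (uB s)) := hu x
    have : x ∈ f ⁻¹' M := by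
      have := closure_mono hsub this
      rwa [hclosed.closure_eq] at this
    exact this
  -- f is surjective since dB (-t) * dB t = 1
  apply Set.eq_univ_of_forall
  intro y
  have : f (act y (dB (-t))) = y := by
    rw [hf]
    show act (act y (dB (-t))) (dB t) = y
    rw [act_mul, dB_neg_mul, act_one]
  rw [← this]
  exact hall _
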